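/- arXiv:2306.01814 — 3 statements merged into one kernel-verified Lean document; each statement's English description precedes it below -/
import Mathlib

section
/- Fix γ > 0. For d ≥ 1, let p_Q(d, γ) = E[ max(‖X‖, ‖Y‖)^γ / (‖X‖^γ + ‖Y‖^γ) ], where X and Y are independent random vectors each uniformly distributed on the closed unit Euclidean ball of ℝ^d. Then p_Q(d, γ) → 1/2 as d → ∞. -/
open MeasureTheory Filter
open Metric ENNReal

/-- The uniform probability measure on the closed unit Euclidean ball in `ℝ^d`. -/
noncomputable def unifBall (d : ℕ) : Measure (EuclideanSpace ℝ (Fin d)) :=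
  (volume (Metric.closedBall (0 : EuclideanSpace ℝ (Fin d)) 1))⁻¹ •
    volume.restrict (Metric.closedBall (0 : EuclideanSpace ℝ (Fin d)) 1)

/-- `p_Q(d, γ)`: the probability that the `γ`-CKL oracle answers correctly on a query
formed by two independent uniform points of the unit ball, with the target at the center. -/
noncomputable def pQ (d : ℕ) (γ : ℝ) : ℝ :=
  ∫ p : EuclideanSpace ℝ (Fin d) × EuclideanSpace ℝ (Fin d),
    (max ‖p.1‖ ‖p.2‖) ^ γ / (‖p.1‖ ^ γ + ‖p.2‖ ^ γ)
    ∂((unifBall d).prod (unifBall d))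

instance unifBall_prob (d : ℕ) : IsProbabilityMeasure (unifBall d) := by
  constructor
  rw [unifBall, Measure.smul_apply, Measure.restrict_apply MeasurableSet.univ, Set.univ_inter,
    smul_eq_mul]
  exact ENNReal.inv_mul_cancel (measure_closedBall_pos _ _ one_pos).ne' measure_closedBall_lt_top.ne

lemma unifBall_closedBall_le (d : ℕ) {r : ℝ} (hr : 0 ≤ r) (hr1 : r ≤ 1) :
    unifBall d (Metric.closedBall 0 r) ≤ ENNReal.ofReal (r ^ d) := by
  rw [unifBall, Measure.smul_apply, Measure.restrict_apply measurableSet_closedBall,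
    smul_eq_mul, Set.inter_eq_self_of_subset_left (closedBall_subset_closedBall hr1),
    Measure.addHaar_closedBall' _ _ hr, finrank_euclideanSpace_fin, ← mul_assoc,
    mul_comm _ (ENNReal.ofReal (r ^ d)), mul_assoc,
    ENNReal.inv_mul_cancel (measure_closedBall_pos _ _ one_pos).ne' measure_closedBall_lt_top.ne,
    mul_one]

lemma pQ_bounds (d : ℕ) (hd : 1 ≤ d) (γ : ℝ) (hγ : 0 < γ) {s : ℝ} (hs0 : 0 < s) (hs1 : s ≤ 1) :
    1/2 ≤ pQ d γ ∧ pQ d γ ≤ 1/(1+s^γ) + 2*s^d := by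
  set μ := unifBall d with hμ
  set P := μ.prod μ with hP
  set f : EuclideanSpace ℝ (Fin d) × EuclideanSpace ℝ (Fin d) → ℝ :=
    fun p => (max ‖p.1‖ ‖p.2‖) ^ γ / (‖p.1‖ ^ γ + ‖p.2‖ ^ γ) with hf
  have hpQ : pQ d γ = ∫ p, f p ∂P := rfl
  have hmeas : Measurable f := by
    have hc : Continuous fun x : ℝ => x ^ γ := Real.continuous_rpow_const hγ.le
    exact (hc.measurable.comp (measurable_fst.norm.max measurable_snd.norm)).div
      ((hc.measurable.comp measurable_fst.norm).add (hc.measurable.comp measurable_snd.norm))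
  have hf0 : ∀ p, 0 ≤ f p := fun p =>
    div_nonneg (Real.rpow_nonneg (le_max_of_le_left (norm_nonneg _)) _)
      (add_nonneg (Real.rpow_nonneg (norm_nonneg _) _) (Real.rpow_nonneg (norm_nonneg _) _))
  have hf1 : ∀ p, f p ≤ 1 := by
    intro p
    rcases eq_or_lt_of_le (add_nonneg (Real.rpow_nonneg (norm_nonneg p.1) γ)
      (Real.rpow_nonneg (norm_nonneg p.2) γ)) with h | h
    · simp [hf, ← h]
    · rw [hf, div_le_one h]
      rcases max_cases ‖p.1‖ ‖p.2‖ with ⟨hm, _⟩ | ⟨hm, _⟩ <;> rw [hm]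
      · exact le_add_of_nonneg_right (Real.rpow_nonneg (norm_nonneg _) _)
      · exact le_add_of_nonneg_left (Real.rpow_nonneg (norm_nonneg _) _)
  have hint : Integrable f P := by
    refine (integrable_const (1:ℝ)).mono' hmeas.aestronglyMeasurable (ae_of_all _ fun p => ?_)
    rw [Real.norm_eq_abs, abs_of_nonneg (hf0 p)]; exact hf1 p
  -- a.e. not both zero
  have hsing : μ {(0 : EuclideanSpace ℝ (Fin d))} = 0 := by
    haveI : Nonempty (Fin d) := ⟨⟨0, hd⟩⟩
    haveI : Nontrivial (EuclideanSpace ℝ (Fin d)) := inferInstance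
    rw [hμ, unifBall, Measure.smul_apply, Measure.restrict_apply' measurableSet_closedBall,
      smul_eq_mul]
    rw [measure_mono_null Set.inter_subset_left (measure_singleton 0), mul_zero]
  have hae : ∀ᵐ p ∂P, p.1 ≠ 0 ∨ p.2 ≠ 0 := by
    rw [ae_iff]
    have hsub : {p : EuclideanSpace ℝ (Fin d) × EuclideanSpace ℝ (Fin d) |
        ¬(p.1 ≠ 0 ∨ p.2 ≠ 0)} ⊆ ({0} : Set (EuclideanSpace ℝ (Fin d))) ×ˢ Set.univ := by
      intro p hp
      simp only [Set.mem_setOf_eq, not_or, not_not] at hp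
      exact ⟨hp.1, Set.mem_univ _⟩
    refine measure_mono_null hsub ?_
    rw [hP, Measure.prod_prod, hsing, zero_mul]
  -- lower bound
  have hlower : 1/2 ≤ pQ d γ := by
    have hle : (fun _ => (1:ℝ)/2) ≤ᵐ[P] f := by
      filter_upwards [hae] with p hp
      have hden : 0 < ‖p.1‖ ^ γ + ‖p.2‖ ^ γ := by
        rcases hp with h | h
        · exact add_pos_of_pos_of_nonneg
            (Real.rpow_pos_of_pos (norm_pos_iff.mpr h) _) (Real.rpow_nonneg (norm_nonneg _) _)
        · exact add_pos_of_nonneg_of_pos (Real.rpow_nonneg (norm_nonneg _) _)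
            (Real.rpow_pos_of_pos (norm_pos_iff.mpr h) _)
      rw [hf, le_div_iff₀ hden]
      have h1 : ‖p.1‖ ^ γ ≤ (max ‖p.1‖ ‖p.2‖) ^ γ :=
        Real.rpow_le_rpow (norm_nonneg _) (le_max_left _ _) hγ.le
      have h2 : ‖p.2‖ ^ γ ≤ (max ‖p.1‖ ‖p.2‖) ^ γ :=
        Real.rpow_le_rpow (norm_nonneg _) (le_max_right _ _) hγ.le
      linarith
    have := integral_mono_ae (integrable_const ((1:ℝ)/2)) hint hle
    rwa [integral_const, measureReal_def, measure_univ, ENNReal.toReal_one, one_smul] at this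
  refine ⟨hlower, ?_⟩
  -- upper bound
  have hsγ : 0 < s ^ γ := Real.rpow_pos_of_pos hs0 _
  have hc0 : (0:ℝ) < 1 + s ^ γ := by linarith
  set c : ℝ := 1/(1+s^γ) with hcdef
  have hcnn : 0 ≤ c := by positivity
  set B : Set (EuclideanSpace ℝ (Fin d) × EuclideanSpace ℝ (Fin d)) :=
    {p | ‖p.1‖ < s ∨ ‖p.2‖ < s} with hBdef
  have hB : MeasurableSet B :=
    (measurable_fst.norm measurableSet_Iio).union (measurable_snd.norm measurableSet_Iio)
  have haeball : ∀ᵐ p ∂P, ‖p.1‖ ≤ 1 ∧ ‖p.2‖ ≤ 1 := by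
    have hnull : μ {x : EuclideanSpace ℝ (Fin d) | ¬ ‖x‖ ≤ 1} = 0 := by
      rw [hμ, unifBall, Measure.smul_apply, Measure.restrict_apply' measurableSet_closedBall,
        smul_eq_mul]
      have : {x : EuclideanSpace ℝ (Fin d) | ¬ ‖x‖ ≤ 1} ∩ Metric.closedBall 0 1 = ∅ := by
        refine Set.eq_empty_iff_forall_notMem.mpr fun x hx => ?_
        exact hx.1 (mem_closedBall_zero_iff.mp hx.2)
      rw [this, measure_empty, mul_zero]
    rw [ae_iff]
    have hsub : {p : EuclideanSpace ℝ (Fin d) × EuclideanSpace ℝ (Fin d) |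
        ¬(‖p.1‖ ≤ 1 ∧ ‖p.2‖ ≤ 1)} ⊆
        ({x : EuclideanSpace ℝ (Fin d) | ¬ ‖x‖ ≤ 1} ×ˢ Set.univ) ∪
        (Set.univ ×ˢ {x : EuclideanSpace ℝ (Fin d) | ¬ ‖x‖ ≤ 1}) := by
      intro p hp
      simp only [Set.mem_setOf_eq, not_and_or] at hp
      rcases hp with h | h
      · exact Or.inl ⟨h, Set.mem_univ _⟩
      · exact Or.inr ⟨Set.mem_univ _, h⟩
    refine measure_mono_null hsub ?_
    refine le_antisymm (le_trans (measure_union_le _ _) ?_) zero_le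
    rw [hP, Measure.prod_prod, Measure.prod_prod, hnull, zero_mul, mul_zero, add_zero]
  have hle2 : ∀ᵐ p ∂P, f p ≤ c + B.indicator (fun _ => (1:ℝ)) p := by
    filter_upwards [haeball] with p hp
    by_cases hpB : p ∈ B
    · rw [Set.indicator_of_mem hpB]
      linarith [hf1 p]
    · rw [Set.indicator_of_notMem hpB, add_zero]
      rw [hBdef, Set.mem_setOf_eq, not_or, not_lt, not_lt] at hpB
      obtain ⟨ha, hb⟩ := hpB
      have key : ∀ a b : ℝ, s ≤ a → s ≤ b → b ≤ 1 → a ≤ b →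
          b ^ γ / (a ^ γ + b ^ γ) ≤ c := by
        intro a b hsa hsb hb1 hab
        have ha0 : 0 ≤ a := hs0.le.trans hsa
        have hsaγ : s ^ γ ≤ a ^ γ := Real.rpow_le_rpow hs0.le hsa hγ.le
        have hbγ1 : b ^ γ ≤ 1 := Real.rpow_le_one (ha0.trans hab) hb1 hγ.le
        have hbγ0 : 0 ≤ b ^ γ := Real.rpow_nonneg (ha0.trans hab) _
        have hden : 0 < a ^ γ + b ^ γ := by
          have := Real.rpow_pos_of_pos (hs0.trans_le hsa) γ; linarith
        rw [hcdef, div_le_div_iff₀ hden hc0]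
        nlinarith
      rcases le_total ‖p.1‖ ‖p.2‖ with h | h
      · show (max ‖p.1‖ ‖p.2‖) ^ γ / (‖p.1‖ ^ γ + ‖p.2‖ ^ γ) ≤ c
        rw [max_eq_right h]
        exact key _ _ ha hb hp.2 h
      · show (max ‖p.1‖ ‖p.2‖) ^ γ / (‖p.1‖ ^ γ + ‖p.2‖ ^ γ) ≤ c
        rw [max_eq_left h, add_comm (‖p.1‖ ^ γ)]
        exact key _ _ hb ha hp.1 h
  have hintR : Integrable (fun p => c + B.indicator (fun _ => (1:ℝ)) p) P :=
    (integrable_const c).add ((integrable_const (1:ℝ)).indicator hB)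
  have hPB : (P B).toReal ≤ 2 * s ^ d := by
    have hsub : B ⊆ ({x : EuclideanSpace ℝ (Fin d) | ‖x‖ < s} ×ˢ Set.univ) ∪
        (Set.univ ×ˢ {x : EuclideanSpace ℝ (Fin d) | ‖x‖ < s}) := by
      intro p hp
      rcases hp with h | h
      · exact Or.inl ⟨h, Set.mem_univ _⟩
      · exact Or.inr ⟨Set.mem_univ _, h⟩
    have hball : μ {x : EuclideanSpace ℝ (Fin d) | ‖x‖ < s} ≤ ENNReal.ofReal (s ^ d) := by
      refine le_trans (measure_mono fun x hx => ?_) (unifBall_closedBall_le d hs0.le hs1)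
      rw [mem_closedBall_zero_iff]; exact le_of_lt hx
    have : P B ≤ ENNReal.ofReal (2 * s ^ d) := by
      refine le_trans (measure_mono hsub) (le_trans (measure_union_le _ _) ?_)
      rw [Measure.prod_prod, Measure.prod_prod, measure_univ, mul_one, one_mul]
      calc μ {x : EuclideanSpace ℝ (Fin d) | ‖x‖ < s} + μ {x : EuclideanSpace ℝ (Fin d) | ‖x‖ < s}
          ≤ ENNReal.ofReal (s ^ d) + ENNReal.ofReal (s ^ d) := add_le_add hball hball
        _ = ENNReal.ofReal (2 * s ^ d) := by
            rw [← ENNReal.ofReal_add (by positivity) (by positivity)]; ring_nf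
    exact ENNReal.toReal_le_of_le_ofReal (by positivity) this
  have := integral_mono_ae hint hintR hle2
  rw [hpQ]
  calc ∫ p, f p ∂P ≤ ∫ p, (c + B.indicator (fun _ => (1:ℝ)) p) ∂P := this
    _ = c + (P B).toReal := by
        rw [integral_add (integrable_const c) ((integrable_const (1:ℝ)).indicator hB),
          integral_const, measureReal_def, measure_univ, ENNReal.toReal_one, one_smul,
          integral_indicator_const _ hB, measureReal_def, smul_eq_mul, mul_one]
    _ ≤ 1/(1+s^γ) + 2*s^d := by rw [hcdef] at *; linarith

/-- For fixed `γ > 0`, the correct-answer probability `p_Q(d, γ)` tends to `1/2`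
as the dimension `d` tends to infinity. -/
theorem stmt5 (γ : ℝ) (hγ : 0 < γ) :
    Tendsto (fun d : ℕ => pQ d γ) atTop (nhds (1/2 : ℝ)) := by
  rw [Metric.tendsto_atTop]
  intro ε hε
  set g : ℝ → ℝ := fun s => 1/(1+s^γ) with hg
  have hgc : ContinuousAt g 1 := by
    refine ContinuousAt.div continuousAt_const
      (continuousAt_const.add (Real.continuousAt_rpow_const 1 γ (Or.inl one_ne_zero))) ?_
    rw [Real.one_rpow]; norm_num
  have hg1 : g 1 = 1/2 := by rw [hg]; simp [Real.one_rpow]; norm_num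
  have hev : ∀ᶠ x in nhds (1:ℝ), g x < 1/2 + ε/2 := by
    refine hgc.eventually_lt continuousAt_const ?_
    rw [hg1]; linarith
  rw [Metric.eventually_nhds_iff] at hev
  obtain ⟨r, hr0, hr⟩ := hev
  set s : ℝ := max (1/2) (1 - r/2) with hs
  have hs0 : 0 < s := lt_of_lt_of_le (by norm_num) (le_max_left _ _)
  have hs1 : s < 1 := by
    rw [hs, max_lt_iff]; constructor <;> [norm_num; linarith]
  have hgs : g s < 1/2 + ε/2 := by
    refine hr ?_
    rw [Real.dist_eq, abs_of_nonpos (by linarith)]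
    have : 1 - r/2 ≤ s := le_max_right _ _
    have h2 : (1:ℝ)/2 ≤ s := le_max_left _ _
    rcases le_or_gt r 1 with h | h
    · linarith
    · linarith
  have hpow : Tendsto (fun d : ℕ => 2 * s ^ d) atTop (nhds 0) := by
    have := (tendsto_pow_atTop_nhds_zero_of_lt_one hs0.le hs1).const_mul (2:ℝ)
    rwa [mul_zero] at this
  have hevd : ∀ᶠ d : ℕ in atTop, 2 * s ^ d < ε/2 :=
    hpow.eventually (eventually_lt_nhds (by linarith))
  rw [eventually_atTop] at hevd
  obtain ⟨N, hN⟩ := hevd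
  refine ⟨max N 1, fun n hn => ?_⟩
  have hn1 : 1 ≤ n := le_trans (le_max_right N 1) hn
  have hnN : N ≤ n := le_trans (le_max_left N 1) hn
  obtain ⟨hlow, hup⟩ := pQ_bounds n hn1 γ hγ hs0 hs1.le
  rw [Real.dist_eq, abs_sub_lt_iff]
  have := hN n hnN
  have hgs' : (1:ℝ)/(1+s^γ) < 1/2 + ε/2 := hgs
  constructor <;> linarith
end

section
/- Fix b ∈ (0, 1). Define μ : ℕ → ℕ → ℝ by μ₀(0) = 1 and μ₀(k) = 0 for k ≥ 1, and for all s ≥ 0: μ_{s+1}(0) = ((1+b)/2)(μ_s(0) + μ_s(1)) and μ_{s+1}(k) = ((1−b)/2) μ_s(k−1) + ((1+b)/2) μ_s(k+1) for k ≥ 1. Then for all s ≥ 0 and all k ≥ 0, the tail mass satisfies ∑_{j > k} μ_s(j) ≤ ((1−b)/(1+b))^k. -/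
/-- Tail bound for the distribution `μ_s` of the downward-biased random walk on `ℕ`
started at `0` (down-probability `(1+b)/2`, up-probability `(1−b)/2`, self-loop at `0`):
for all times `s` and all `k`, `∑_{j > k} μ_s(j) ≤ ((1−b)/(1+b))^k`. -/
theorem stmt10 (b : ℝ) (hb : b ∈ Set.Ioo (0:ℝ) 1) (μ : ℕ → ℕ → ℝ)
    (h00 : μ 0 0 = 1) (h0k : ∀ k, 1 ≤ k → μ 0 k = 0)
    (hrec0 : ∀ s, μ (s + 1) 0 = (1 + b)/2 * (μ s 0 + μ s 1))
    (hreck : ∀ s k, 1 ≤ k →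
      μ (s + 1) k = (1 - b)/2 * μ s (k - 1) + (1 + b)/2 * μ s (k + 1)) :
    ∀ s k : ℕ, (∑' j : ℕ, if k < j then μ s j else 0) ≤ ((1 - b)/(1 + b))^k := by
  obtain ⟨hb0, hb1⟩ := hb
  have h1b : (0:ℝ) < 1 + b := by linarith
  have h1b' : (0:ℝ) < 1 - b := by linarith
  have hp0 : (0:ℝ) < (1 + b)/2 := by linarith
  have hq0 : (0:ℝ) < (1 - b)/2 := by linarith
  have hr0 : (0:ℝ) < (1 - b)/(1 + b) := by positivity
  have hpr : (1 + b)/2 * ((1 - b)/(1 + b)) = (1 - b)/2 := by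
    field_simp
  -- finite support
  have hsupp : ∀ s j, s < j → μ s j = 0 := by
    intro s
    induction s with
    | zero => exact fun j hj => h0k j hj
    | succ s ih =>
      intro j hj
      have hj1 : 1 ≤ j := by omega
      rw [hreck s j hj1, ih (j-1) (by omega), ih (j+1) (by omega)]
      ring
  have S : ∀ (f : ℕ → ℝ) (n : ℕ), (∀ j, n < j → f j = 0) → Summable f := by
    intro f n h
    apply summable_of_ne_finset_zero (s := Finset.range (n+1))
    intro j hj
    exact h j (by simpa using hj)
  have Sμ : ∀ s, Summable (μ s) := fun s => S (μ s) s (hsupp s)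
  have Sμ1 : ∀ s, Summable (fun j => μ s (j+1)) :=
    fun s => S _ s (fun j hj => hsupp s (j+1) (by omega))
  have Sμ2 : ∀ s, Summable (fun j => μ s (j+2)) :=
    fun s => S _ s (fun j hj => hsupp s (j+2) (by omega))
  have Sif : ∀ s k, Summable (fun j => if k < j then μ s j else 0) := by
    intro s k
    refine S _ s fun j hj => ?_
    rw [hsupp s j hj]; simp
  have Sif1 : ∀ s k, Summable (fun j => if k < j then μ s (j+1) else 0) := by
    intro s k
    refine S _ s fun j hj => ?_
    rw [hsupp s (j+1) (by omega)]; simp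
  have Sifm : ∀ s k, Summable (fun j => if k < j then μ s (j-1) else 0) := by
    intro s k
    refine S _ (s+1) fun j hj => ?_
    rw [hsupp s (j-1) (by omega)]; simp
  -- shifting the tail
  have hshift : ∀ s k, (∑' j : ℕ, if k + 1 < j then μ s j else 0)
      = ∑' j : ℕ, if k < j then μ s (j+1) else 0 := by
    intro s k
    rw [Summable.tsum_eq_zero_add (Sif s (k+1))]
    have h0 : (if k + 1 < 0 then μ s 0 else 0) = 0 := by simp
    rw [h0, zero_add]
    exact tsum_congr fun j => if_congr (by omega) rfl rfl
  have htail2 : ∀ s, (∑' j : ℕ, if 1 < j then μ s j else 0) = ∑' j : ℕ, μ s (j+2) := by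
    intro s
    rw [show (1:ℕ) = 0 + 1 from rfl, hshift s 0, Summable.tsum_eq_zero_add (Sif1 s 0)]
    have h0 : (if (0:ℕ) < 0 then μ s (0+1) else 0) = 0 := by simp
    rw [h0, zero_add]
    exact tsum_congr fun j => by rw [if_pos (by omega)]
  -- total mass
  have hM : ∀ s, (∑' j : ℕ, μ s j) = 1 := by
    intro s
    induction s with
    | zero =>
      rw [Summable.tsum_eq_zero_add (Sμ 0), h00]
      have h1 : (fun j : ℕ => μ 0 (j+1)) = fun _ => (0:ℝ) :=
        funext fun j => h0k (j+1) (by omega)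
      rw [h1, tsum_zero]
      norm_num
    | succ s ih =>
      have h2 : μ s 0 + (μ s 1 + ∑' j : ℕ, μ s (j+2)) = 1 := by
        rw [← Summable.tsum_eq_zero_add (Sμ1 s), ← Summable.tsum_eq_zero_add (Sμ s), ih]
      rw [Summable.tsum_eq_zero_add (Sμ (s+1)), hrec0 s]
      have e : ∀ j : ℕ, μ (s+1) (j+1) = (1 - b)/2 * μ s j + (1 + b)/2 * μ s (j+2) := by
        intro j
        rw [hreck s (j+1) (by omega)]
        norm_num
      rw [tsum_congr e, Summable.tsum_add ((Sμ s).mul_left _) ((Sμ2 s).mul_left _),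
        tsum_mul_left, tsum_mul_left, ih]
      have hC : (∑' j : ℕ, μ s (j+2)) = 1 - μ s 0 - μ s 1 := by linarith
      rw [hC]; ring
  -- main induction
  intro s
  induction s with
  | zero =>
    intro k
    have hz : (fun j : ℕ => if k < j then μ 0 j else 0) = fun _ => (0:ℝ) := by
      funext j
      by_cases h : k < j
      · rw [if_pos h, h0k j (by omega)]
      · rw [if_neg h]
    rw [hz, tsum_zero]
    positivity
  | succ s ih =>
    intro k
    match k with
    | 0 =>
      have e0 : (∑' j : ℕ, if 0 < j then μ (s+1) j else 0)
          = (1 - b)/2 * 1 + (1 + b)/2 * (∑' j : ℕ, if 1 < j then μ s j else 0) := by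
        rw [Summable.tsum_eq_zero_add (Sif (s+1) 0)]
        have h0 : (if (0:ℕ) < 0 then μ (s+1) 0 else 0) = 0 := by simp
        rw [h0, zero_add]
        have e : ∀ j : ℕ, (if 0 < j + 1 then μ (s+1) (j+1) else 0)
            = (1 - b)/2 * μ s j + (1 + b)/2 * μ s (j+2) := by
          intro j
          rw [if_pos (by omega), hreck s (j+1) (by omega)]
          norm_num
        rw [tsum_congr e, Summable.tsum_add ((Sμ s).mul_left _) ((Sμ2 s).mul_left _),
          tsum_mul_left, tsum_mul_left, hM s, htail2 s]
      rw [e0]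
      have h1 := ih 1
      have h1' : (1 + b)/2 * (∑' j : ℕ, if 1 < j then μ s j else 0)
          ≤ (1 + b)/2 * ((1 - b)/(1 + b))^1 :=
        mul_le_mul_of_nonneg_left h1 hp0.le
      rw [pow_one, hpr] at h1'
      rw [pow_zero]
      linarith
    | (m+1) =>
      have key : (∑' j : ℕ, if m + 1 < j then μ (s+1) j else 0)
          = (1 - b)/2 * (∑' j : ℕ, if m < j then μ s j else 0)
          + (1 + b)/2 * (∑' j : ℕ, if m + 2 < j then μ s j else 0) := by
        have e : ∀ j : ℕ, (if m + 1 < j then μ (s+1) j else 0)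
            = (1 - b)/2 * (if m + 1 < j then μ s (j-1) else 0)
            + (1 + b)/2 * (if m + 1 < j then μ s (j+1) else 0) := by
          intro j
          by_cases h : m + 1 < j
          · rw [if_pos h, if_pos h, if_pos h, hreck s j (by omega)]
          · rw [if_neg h, if_neg h, if_neg h]; ring
        rw [tsum_congr e, Summable.tsum_add ((Sifm s (m+1)).mul_left _) ((Sif1 s (m+1)).mul_left _),
          tsum_mul_left, tsum_mul_left]
        congr 1
        · congr 1
          rw [Summable.tsum_eq_zero_add (Sifm s (m+1))]
          have h0 : (if m + 1 < 0 then μ s (0-1) else 0) = 0 := by simp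
          rw [h0, zero_add]
          refine tsum_congr fun j => ?_
          have : j + 1 - 1 = j := by omega
          rw [this]
          exact if_congr (by omega) rfl rfl
        · congr 1
          rw [show m + 2 = (m + 1) + 1 from rfl, hshift s (m+1)]
      rw [key]
      have hA : (1 - b)/2 * (∑' j : ℕ, if m < j then μ s j else 0)
          ≤ (1 - b)/2 * ((1 - b)/(1 + b))^m :=
        mul_le_mul_of_nonneg_left (ih m) hq0.le
      have hB : (1 + b)/2 * (∑' j : ℕ, if m + 2 < j then μ s j else 0)
          ≤ (1 + b)/2 * ((1 - b)/(1 + b))^(m+2) :=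
        mul_le_mul_of_nonneg_left (ih (m+2)) hp0.le
      have e2 : (1 - b)/2 * ((1 - b)/(1 + b))^m
          + (1 + b)/2 * ((1 - b)/(1 + b))^(m+2) = ((1 - b)/(1 + b))^(m+1) := by
        rw [pow_succ, pow_succ]
        field_simp
        ring
      linarith
end

section
/- Let d ≥ 1 and let x_q = (d+1)·e₁ ∈ ℝ^d where e₁ = (1, 0, …, 0). Then for every x ∈ ℝ^d with |x_i| ≤ 1 for all coordinates i (i.e. x in the hypercube [−1, 1]^d), one has (d² + d − 1)·‖x‖² ≤ d·‖x_q − x‖² (Euclidean norms). Equivalently, the ratio ‖x‖/‖x_q − x‖ over the hypercube [−1, 1]^d is maximized at the corner 𝟙 = (1, …, 1), where it equals √(d/(d² + d − 1)). -/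
/-!
Split `x` into its first coordinate `t` and the rest. Expanding the square gives
`‖x_q - x‖² = (d+1)² - 2(d+1)t + ‖x‖²`, and the other coordinates contribute at most `d - 1`
to `‖x‖²`, so the claim reduces to the one-variable inequality
`(d-1)(t² + d - 1) ≤ d(d + 1 - 2t)` on `[-1, 1]`. The difference of the two sides factors as
`(1 - t)((d-1)t + 3d - 1)`, which vanishes at the corner `t = 1`.
-/

open Finset

namespace EuclideanSpace

variable {ι : Type*} [Fintype ι] [DecidableEq ι]

theorem norm_smul_single_sub_sq (c : ℝ) (i : ι) (x : EuclideanSpace ℝ ι) :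
    ‖c • single i (1 : ℝ) - x‖ ^ 2 = c ^ 2 - 2 * c * x i + ‖x‖ ^ 2 := by
  rw [norm_sub_sq_real, norm_smul, inner_smul_left, inner_single_left, PiLp.norm_single]
  simp only [norm_one, mul_one, conj_trivial, Real.norm_eq_abs, sq_abs]
  ring

theorem norm_sq_le_sq_add_card_sub_one {x : EuclideanSpace ℝ ι} (hx : ∀ j, |x j| ≤ 1) (i : ι) :
    ‖x‖ ^ 2 ≤ x i ^ 2 + (Fintype.card ι - 1) := by
  have hrest : ∑ j ∈ univ.erase i, x j ^ 2 ≤ ∑ _j ∈ univ.erase i, (1 : ℝ) :=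
    sum_le_sum fun j _ => by simpa using sq_le_one_iff_abs_le_one (x j) |>.mpr (hx j)
  rw [sum_const, card_erase_of_mem (mem_univ i), card_univ, nsmul_one,
    Nat.cast_pred (Fintype.card_pos_iff.mpr ⟨i⟩)] at hrest
  rw [norm_sq_eq, ← add_sum_erase _ _ (mem_univ i)]
  simpa only [Real.norm_eq_abs, sq_abs] using add_le_add_right hrest (x i ^ 2)

end EuclideanSpace

theorem corner_ratio_bound {d t n : ℝ} (hd : 1 ≤ d) (ht : |t| ≤ 1) (hn : n ≤ t ^ 2 + (d - 1)) :
    (d ^ 2 + d - 1) * n ≤ d * ((d + 1) ^ 2 - 2 * (d + 1) * t + n) := by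
  obtain ⟨ht₁, ht₂⟩ := abs_le.mp ht
  have hfactor : 0 ≤ (1 - t) * ((d - 1) * (t + 1) + 2 * d) := by
    apply mul_nonneg <;> nlinarith
  nlinarith [mul_le_mul_of_nonneg_left hn (by nlinarith : (0 : ℝ) ≤ d ^ 2 - 1)]

/-- Over the hypercube `[−1,1]^d`, the distance ratio to the query points `0` and
`x_q = (d+1)·e₁` is maximized at the corner `𝟙`: every `x` with `|x_i| ≤ 1` for all `i`
satisfies `(d² + d − 1)‖x‖² ≤ d‖x_q − x‖²`. -/
theorem stmt16 (d : ℕ) (hd : 1 ≤ d) :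
    ∀ x : EuclideanSpace ℝ (Fin d), (∀ i : Fin d, |x i| ≤ 1) →
      ((d : ℝ)^2 + d - 1) * ‖x‖^2
        ≤ d * ‖((d : ℝ) + 1) • EuclideanSpace.single (⟨0, hd⟩ : Fin d) 1 - x‖^2 := by
  intro x hx
  rw [EuclideanSpace.norm_smul_single_sub_sq]
  have hrest := EuclideanSpace.norm_sq_le_sq_add_card_sub_one hx ⟨0, hd⟩
  rw [Fintype.card_fin] at hrest
  exact corner_ratio_bound (by exact_mod_cast hd) (hx _) hrest
end
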